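/- arXiv:1504.04527 — 2 statements merged into one kernel-verified Lean document; each statement's English description precedes it below -/
import Mathlib

section
/- Suppose R(Cᵀ) ⊆ R(Aᵀ), R(B) ⊆ R(A), R(CA†) ⊆ R(F), and R((A†B)ᵀ) ⊆ R(Fᵀ), where F = D - CA†B. Then the Moore-Penrose inverse of the block matrix M = [[A,B],[C,D]] is [[A† + A†BF†CA†, -A†BF†],[-F†CA†, F†]]. -/
/-!
The range inclusions `R(B) ⊆ R(A)` and `R(Cᵀ) ⊆ R(Aᵀ)` give `A A† B = B` and `C A† A = C`, so `M`
has the generalized LDU factorization `M = L · diag(A, F) · U` with unitriangular `L`, `U`, and the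
candidate is `U⁻¹ · diag(A†, F†) · L⁻¹`. Conjugating a Moore–Penrose pair this way always
preserves the two Penrose equations `MNM = M`, `NMN = N`. The symmetry equations survive because
the other two inclusions, `F F† C A† = C A†` and `A† B F† F = A† B`, make `L` and `U` commute with
`diag(A A†, F F†)` and `diag(A† A, F† F)`, so `MN` and `NM` are these symmetric block diagonals.
-/

open Matrix LinearMap

/-- `X` is the Moore-Penrose inverse of `A`. -/
def IsMoorePenrose {α β : Type*} [Fintype α] [Fintype β] [DecidableEq α] [DecidableEq β]
    (A : Matrix α β ℝ) (X : Matrix β α ℝ) : Prop :=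
  A * X * A = A ∧ X * A * X = X ∧ (A * X)ᵀ = A * X ∧ (X * A)ᵀ = X * A

namespace Matrix

variable {l m n o R : Type*}

theorem exists_eq_mul_of_range_mulVecLin_le [Fintype l] [Fintype n] [CommSemiring R]
    {X : Matrix m l R} {Y : Matrix m n R}
    (h : range X.mulVecLin ≤ range Y.mulVecLin) : ∃ Z : Matrix n l R, X = Y * Z := by
  have hcol : ∀ j, ∃ w, Y *ᵥ w = X.col j := fun j =>
    h (by rw [range_mulVecLin]; exact Submodule.subset_span ⟨j, rfl⟩)
  choose w hw using hcol
  refine ⟨(of w)ᵀ, ?_⟩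
  ext i j
  exact (congrFun (hw j) i).symm

theorem mul_mul_eq_of_range_mulVecLin_le [Fintype l] [Fintype m] [Fintype n] [CommSemiring R]
    {X : Matrix m l R} {Y : Matrix m n R} {Y' : Matrix n m R}
    (hY : Y * Y' * Y = Y) (h : range X.mulVecLin ≤ range Y.mulVecLin) : Y * Y' * X = X := by
  obtain ⟨Z, rfl⟩ := exists_eq_mul_of_range_mulVecLin_le h
  rw [← Matrix.mul_assoc, hY]

theorem mul_mul_eq_of_range_mulVecLin_transpose_le [Fintype l] [Fintype m] [Fintype n]
    [CommSemiring R] {X : Matrix l n R} {Y : Matrix m n R} {Y' : Matrix n m R}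
    (hY : Y * Y' * Y = Y) (h : range Xᵀ.mulVecLin ≤ range Yᵀ.mulVecLin) : X * Y' * Y = X := by
  obtain ⟨Z, hZ⟩ := exists_eq_mul_of_range_mulVecLin_le h
  rw [← transpose_transpose X, hZ, transpose_mul, transpose_transpose, Matrix.mul_assoc,
    Matrix.mul_assoc, ← Matrix.mul_assoc Y, hY]

section Blocks

theorem fromBlocks_diag_mul_fromBlocks_diag [Fintype n] [Fintype o] [Ring R]
    (P : Matrix m n R) (Q : Matrix l o R) (P' : Matrix n m R) (Q' : Matrix o l R) :
    fromBlocks P 0 0 Q * fromBlocks P' 0 0 Q' = fromBlocks (P * P') 0 0 (Q * Q') := by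
  simp [fromBlocks_multiply]

variable [Fintype l] [Fintype m] [Fintype n] [Fintype o] [Ring R]
  [DecidableEq l] [DecidableEq m] [DecidableEq n] [DecidableEq o]

theorem fromBlocks_eq_of_mul_mul_eq (A : Matrix m n R) (B : Matrix m o R) (C : Matrix l n R)
    (D : Matrix l o R) {A' : Matrix n m R} (hB : A * A' * B = B) (hC : C * A' * A = C) :
    fromBlocks A B C D =
      fromBlocks (1 : Matrix m m R) 0 (C * A') (1 : Matrix l l R) *
          fromBlocks A 0 0 (D - C * A' * B) *
        fromBlocks (1 : Matrix n n R) (A' * B) 0 (1 : Matrix o o R) := by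
  simp [fromBlocks_multiply, hC, ← Matrix.mul_assoc, hB]

theorem fromBlocks_upper_mul_diag_mul_lower
    (P : Matrix n m R) (Q : Matrix o l R) (X : Matrix l m R) (Y : Matrix n o R) :
    fromBlocks (1 : Matrix n n R) (-Y) 0 (1 : Matrix o o R) * fromBlocks P 0 0 Q *
        fromBlocks (1 : Matrix m m R) 0 (-X) (1 : Matrix l l R) =
      fromBlocks (P + Y * Q * X) (-(Y * Q)) (-(Q * X)) Q := by
  simp [fromBlocks_multiply, Matrix.mul_assoc]

theorem fromBlocks_lower_conj_diag (P : Matrix m m R) (Q : Matrix n n R) {X : Matrix n m R}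
    (hX : X * P = Q * X) :
    fromBlocks 1 0 X 1 * fromBlocks P 0 0 Q * fromBlocks 1 0 (-X) 1 = fromBlocks P 0 0 Q := by
  simp [fromBlocks_multiply, hX]

theorem fromBlocks_upper_conj_diag (P : Matrix m m R) (Q : Matrix n n R) {Y : Matrix m n R}
    (hY : P * Y = Y * Q) :
    fromBlocks 1 (-Y) 0 1 * fromBlocks P 0 0 Q * fromBlocks 1 Y 0 1 = fromBlocks P 0 0 Q := by
  simp [fromBlocks_multiply, hY]

theorem fromBlocks_lower_neg_mul_lower (X : Matrix n m R) :
    fromBlocks (1 : Matrix m m R) 0 (-X) 1 * fromBlocks 1 0 X (1 : Matrix n n R) = 1 := by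
  simp [fromBlocks_multiply]

theorem fromBlocks_upper_mul_upper_neg (Y : Matrix m n R) :
    fromBlocks (1 : Matrix m m R) Y 0 (1 : Matrix n n R) * fromBlocks 1 (-Y) 0 1 = 1 := by
  simp [fromBlocks_multiply]

end Blocks

end Matrix

namespace IsMoorePenrose

variable {α β γ δ : Type*} [Fintype α] [Fintype β] [Fintype γ] [Fintype δ]
  [DecidableEq α] [DecidableEq β] [DecidableEq γ] [DecidableEq δ]

theorem fromBlocks_diag {A : Matrix α β ℝ} {A' : Matrix β α ℝ} {F : Matrix γ δ ℝ}
    {F' : Matrix δ γ ℝ} (hA : IsMoorePenrose A A') (hF : IsMoorePenrose F F') :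
    IsMoorePenrose (fromBlocks A 0 0 F) (fromBlocks A' 0 0 F') := by
  obtain ⟨hA₁, hA₂, hA₃, hA₄⟩ := hA
  obtain ⟨hF₁, hF₂, hF₃, hF₄⟩ := hF
  refine ⟨?_, ?_, ?_, ?_⟩ <;>
    simp [fromBlocks_multiply, fromBlocks_transpose, *]

theorem conj {X : Matrix α β ℝ} {Y : Matrix β α ℝ} {L L' : Matrix α α ℝ}
    {U U' : Matrix β β ℝ} (h : IsMoorePenrose X Y) (hL : L' * L = 1) (hU : U * U' = 1)
    (hXY : L * (X * Y) * L' = X * Y) (hYX : U' * (Y * X) * U = Y * X) :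
    IsMoorePenrose (L * X * U) (U' * Y * L') := by
  obtain ⟨h₁, h₂, h₃, h₄⟩ := h
  have hMN : L * X * U * (U' * Y * L') = X * Y := by
    rw [← hXY]; simp only [Matrix.mul_assoc]; rw [← Matrix.mul_assoc U, hU, Matrix.one_mul]
  have hNM : U' * Y * L' * (L * X * U) = Y * X := by
    rw [← hYX]; simp only [Matrix.mul_assoc]; rw [← Matrix.mul_assoc L', hL, Matrix.one_mul]
  have hXYL : X * Y * L = L * (X * Y) := by
    conv_lhs => rw [← hXY, Matrix.mul_assoc, hL, Matrix.mul_one]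
  have hYXU : Y * X * U' = U' * (Y * X) := by
    conv_lhs => rw [← hYX, Matrix.mul_assoc, hU, Matrix.mul_one]
  refine ⟨?_, ?_, by rw [hMN, h₃], by rw [hNM, h₄]⟩
  · rw [hMN, ← Matrix.mul_assoc, ← Matrix.mul_assoc, hXYL, Matrix.mul_assoc L, h₁]
  · rw [hNM, ← Matrix.mul_assoc, ← Matrix.mul_assoc, hYXU, Matrix.mul_assoc U', h₂]

end IsMoorePenrose

theorem stmt5
    {m n s p : ℕ}
    (A : Matrix (Fin m) (Fin n) ℝ) (B : Matrix (Fin m) (Fin p) ℝ)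
    (C : Matrix (Fin s) (Fin n) ℝ) (D : Matrix (Fin s) (Fin p) ℝ)
    (Ad : Matrix (Fin n) (Fin m) ℝ) (hA : IsMoorePenrose A Ad)
    (Fd : Matrix (Fin p) (Fin s) ℝ) (hF : IsMoorePenrose (D - C * Ad * B) Fd)
    (hCt : LinearMap.range (Matrix.mulVecLin (Cᵀ)) ≤ LinearMap.range (Matrix.mulVecLin (Aᵀ)))
    (hB : LinearMap.range (Matrix.mulVecLin (B)) ≤ LinearMap.range (Matrix.mulVecLin (A)))
    (hCA : LinearMap.range (Matrix.mulVecLin (C * Ad)) ≤ LinearMap.range (Matrix.mulVecLin (D - C * Ad * B)))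
    (hAB : LinearMap.range (Matrix.mulVecLin ((Ad * B)ᵀ)) ≤ LinearMap.range (Matrix.mulVecLin ((D - C * Ad * B)ᵀ))) :
    IsMoorePenrose (Matrix.fromBlocks A B C D)
      (Matrix.fromBlocks (Ad + Ad * B * Fd * C * Ad) (-(Ad * B * Fd)) (-(Fd * C * Ad)) Fd) := by
  set F := D - C * Ad * B
  have hAdB : A * Ad * B = B := mul_mul_eq_of_range_mulVecLin_le hA.1 hB
  have hCAd : C * Ad * A = C := mul_mul_eq_of_range_mulVecLin_transpose_le hA.1 hCt
  have hFFd : F * Fd * (C * Ad) = C * Ad := mul_mul_eq_of_range_mulVecLin_le hF.1 hCA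
  have hFdF : Ad * B * Fd * F = Ad * B := mul_mul_eq_of_range_mulVecLin_transpose_le hF.1 hAB
  have hN := fromBlocks_upper_mul_diag_mul_lower Ad Fd (C * Ad) (Ad * B)
  simp only [← Matrix.mul_assoc] at hN
  rw [fromBlocks_eq_of_mul_mul_eq A B C D hAdB hCAd, ← hN]
  refine (hA.fromBlocks_diag hF).conj (fromBlocks_lower_neg_mul_lower _)
    (fromBlocks_upper_mul_upper_neg _) ?_ ?_
  · rw [fromBlocks_diag_mul_fromBlocks_diag]
    exact fromBlocks_lower_conj_diag _ _ (by rw [hFFd, ← Matrix.mul_assoc, hCAd])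
  · rw [fromBlocks_diag_mul_fromBlocks_diag]
    exact fromBlocks_upper_conj_diag _ _
      (by rw [← Matrix.mul_assoc, hA.2.1, ← Matrix.mul_assoc, hFdF])
end

section
/- If R(B) ⊆ R(A) and R((A†B)ᵀ) ⊆ R(Fᵀ) where F = D - CA†B, then BF†F = B. -/
/-! Since `R(B) ⊆ R(A)`, `B = A A† B`; dually, `R((A†B)ᵀ) ⊆ R(Fᵀ)` gives `A†B F† F = A†B`.
Hence `B F† F = A (A†B F† F) = A A† B = B`. -/

open Matrix LinearMap

namespace Matrix

variable {R : Type*} [CommSemiring R] {k l r : Type*} [Fintype k] [Fintype l] [Fintype r]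

theorem mul_mul_eq_of_range_mulVecLin_le_s10 {A : Matrix k l R} {X : Matrix l k R}
    {B : Matrix k r R} (hBA : range B.mulVecLin ≤ range A.mulVecLin) (hAXA : A * X * A = A) :
    A * X * B = B := by
  refine ext_iff_mulVec.2 fun v => ?_
  obtain ⟨x, hx : A *ᵥ x = B *ᵥ v⟩ := hBA ⟨v, rfl⟩
  calc (A * X * B) *ᵥ v = (A * X * A) *ᵥ x := by rw [← mulVec_mulVec, ← hx, mulVec_mulVec]
    _ = B *ᵥ v := by rw [hAXA, hx]

theorem mul_mul_eq_of_range_mulVecLin_transpose_le_s10 {A : Matrix k l R} {X : Matrix l k R}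
    {B : Matrix r l R} (hBA : range Bᵀ.mulVecLin ≤ range Aᵀ.mulVecLin) (hAXA : A * X * A = A) :
    B * X * A = B := by
  have hAXA' : Aᵀ * Xᵀ * Aᵀ = Aᵀ := by
    rw [← transpose_mul, ← transpose_mul, ← Matrix.mul_assoc, hAXA]
  have := congrArg transpose (mul_mul_eq_of_range_mulVecLin_le_s10 hBA hAXA')
  rwa [transpose_mul, transpose_mul, transpose_transpose, transpose_transpose, transpose_transpose,
    ← Matrix.mul_assoc] at this

end Matrix

theorem stmt10
    {m n s p : ℕ}
    (A : Matrix (Fin m) (Fin n) ℝ) (B : Matrix (Fin m) (Fin p) ℝ)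
    (C : Matrix (Fin s) (Fin n) ℝ) (D : Matrix (Fin s) (Fin p) ℝ)
    (Ad : Matrix (Fin n) (Fin m) ℝ) (hA : IsMoorePenrose A Ad)
    (Fd : Matrix (Fin p) (Fin s) ℝ) (hF : IsMoorePenrose (D - C * Ad * B) Fd)
    (hB : LinearMap.range (Matrix.mulVecLin (B)) ≤ LinearMap.range (Matrix.mulVecLin (A)))
    (hAB : LinearMap.range (Matrix.mulVecLin ((Ad * B)ᵀ)) ≤ LinearMap.range (Matrix.mulVecLin ((D - C * Ad * B)ᵀ))) :
    B * Fd * (D - C * Ad * B) = B := by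
  set F := D - C * Ad * B
  have hB' : A * Ad * B = B := mul_mul_eq_of_range_mulVecLin_le_s10 hB hA.1
  have hAB' : Ad * B * Fd * F = Ad * B := mul_mul_eq_of_range_mulVecLin_transpose_le_s10 hAB hF.1
  calc B * Fd * F = A * Ad * B * Fd * F := by rw [hB']
    _ = A * (Ad * B * Fd * F) := by simp only [Matrix.mul_assoc]
    _ = A * (Ad * B) := by rw [hAB']
    _ = B := by rw [← Matrix.mul_assoc, hB']
end
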